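/- arXiv:2105.09098 — 2 statements merged into one kernel-verified Lean document; each statement's English description precedes it below -/
import Mathlib

section
/- Let A, B ∈ L(H,K) with A, B having closed range. Then A ≤* B in the star order if and only if A† ≤* B† in the star order. -/
open ContinuousLinearMap

/-- The orthogonal projection onto the closure of the range of `A`. -/
noncomputable def projCR {E F : Type*} [NormedAddCommGroup E] [InnerProductSpace ℂ E]
    [NormedAddCommGroup F] [InnerProductSpace ℂ F] [CompleteSpace F]
    (A : E →L[ℂ] F) : F →L[ℂ] F :=
  (LinearMap.range (A : E →ₗ[ℂ] F)).topologicalClosure.subtypeL ∘L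
    Submodule.orthogonalProjectionOnto (LinearMap.range (A : E →ₗ[ℂ] F)).topologicalClosure

/-- `Td` is the (bounded) Moore-Penrose inverse of `T`: `T Td = P_T`, `Td T = P_{T*}`,
and `Td T Td = Td`. -/
def IsMPInv {E F : Type*} [NormedAddCommGroup E] [InnerProductSpace ℂ E] [CompleteSpace E]
    [NormedAddCommGroup F] [InnerProductSpace ℂ F] [CompleteSpace F]
    (T : E →L[ℂ] F) (Td : F →L[ℂ] E) : Prop :=
  T ∘L Td = projCR T ∧ Td ∘L T = projCR (adjoint T) ∧ Td ∘L (T ∘L Td) = Td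

/-!
With a Moore–Penrose inverse `T†`, the star order `T ≤* S` is equivalent to `T†T = T†S` and
`TT† = ST†`: multiply `T*T = T*S` on the left by `T†*` and use `T†* T* = (TT†)* = TT†`, and
`TT* = ST*` on the right by `T†*`. Since `T†† = T`, the claim `T† ≤* S†` then reads `TT† = TS†`
and `T†T = S†T`, the second being the adjoint form of the first. From `T = TT†S` and `T = ST†T`
one gets `SS†T = T`, hence `TS† = (TT†)(SS†) = ((SS†)(TT†))* = (TT†)* = TT†`.
-/

section ProjCR

variable {E F G : Type*} [NormedAddCommGroup E] [InnerProductSpace ℂ E]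
  [NormedAddCommGroup F] [InnerProductSpace ℂ F] [CompleteSpace F]
  [NormedAddCommGroup G] [InnerProductSpace ℂ G]

lemma adjoint_projCR (T : E →L[ℂ] F) : adjoint (projCR T) = projCR T :=
  (isSelfAdjoint_starProjection _).adjoint_eq

lemma projCR_comp_self (T : E →L[ℂ] F) : projCR T ∘L T = T := by
  ext x
  exact Submodule.starProjection_eq_self_iff.2
    (Submodule.le_topologicalClosure _ (LinearMap.mem_range_self _ x))

lemma projCR_congr {T : E →L[ℂ] F} {S : G →L[ℂ] F}
    (h : (LinearMap.range (T : E →ₗ[ℂ] F)).topologicalClosure =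
      (LinearMap.range (S : G →ₗ[ℂ] F)).topologicalClosure) :
    projCR T = projCR S := by
  change Submodule.starProjection _ = Submodule.starProjection _
  simp only [h]

lemma range_projCR (T : E →L[ℂ] F) :
    LinearMap.range (projCR T : F →ₗ[ℂ] F) = (LinearMap.range (T : E →ₗ[ℂ] F)).topologicalClosure :=
  Submodule.range_starProjection _

lemma projCR_eq_of_comp_comp_self {T : E →L[ℂ] F} {S : F →L[ℂ] E} {R : G →L[ℂ] F}
    (hT : T ∘L S ∘L T = T) (hTS : T ∘L S = projCR R) : projCR T = projCR R := by
  have hrange : LinearMap.range (T : E →ₗ[ℂ] F) = LinearMap.range (T ∘L S : F →ₗ[ℂ] F) := by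
    refine le_antisymm ?_ (LinearMap.range_comp_le_range (S : F →ₗ[ℂ] E) (T : E →ₗ[ℂ] F))
    conv_lhs => rw [← hT]
    exact LinearMap.range_comp_le_range (T : E →ₗ[ℂ] F) (T ∘L S : F →ₗ[ℂ] F)
  refine projCR_congr ?_
  rw [hrange, hTS, range_projCR,
    (Submodule.isClosed_topologicalClosure _).submodule_topologicalClosure_eq]

end ProjCR

section StarOrder

variable {E F : Type*} [NormedAddCommGroup E] [InnerProductSpace ℂ E] [CompleteSpace E]
  [NormedAddCommGroup F] [InnerProductSpace ℂ F] [CompleteSpace F]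

/-- The star order `T ≤* S`. -/
def StarLE (T S : E →L[ℂ] F) : Prop :=
  adjoint T ∘L T = adjoint T ∘L S ∧ T ∘L adjoint T = S ∘L adjoint T

lemma starLE_adjoint {T S : E →L[ℂ] F} (h : StarLE T S) : StarLE (adjoint T) (adjoint S) := by
  constructor
  · rw [← adjoint_comp, ← adjoint_comp, h.2]
  · rw [← adjoint_comp, ← adjoint_comp, h.1]

namespace IsMPInv

variable {T S : E →L[ℂ] F} {Td Sd : F →L[ℂ] E}

lemma comp_inv_comp_self (h : IsMPInv T Td) : T ∘L Td ∘L T = T := by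
  rw [← comp_assoc, h.1, projCR_comp_self]

lemma adjoint_comp_inv (h : IsMPInv T Td) : adjoint (T ∘L Td) = T ∘L Td := by
  rw [h.1, adjoint_projCR]

lemma adjoint_inv_comp (h : IsMPInv T Td) : adjoint (Td ∘L T) = Td ∘L T := by
  rw [h.2.1, adjoint_projCR]

lemma symm (h : IsMPInv T Td) : IsMPInv Td T := by
  refine ⟨?_, ?_, h.comp_inv_comp_self⟩
  · rw [projCR_eq_of_comp_comp_self h.2.2 h.2.1, h.2.1]
  · have hTd : adjoint Td ∘L adjoint T ∘L adjoint Td = adjoint Td := by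
      rw [← adjoint_comp, ← adjoint_comp, comp_assoc, h.2.2]
    have hTdT : adjoint Td ∘L adjoint T = projCR T := by
      rw [← adjoint_comp, h.adjoint_comp_inv, h.1]
    rw [projCR_eq_of_comp_comp_self hTd hTdT, h.1]

lemma _root_.isMPInv_adjoint (h : IsMPInv T Td) : IsMPInv (adjoint T) (adjoint Td) := by
  refine ⟨?_, ?_, ?_⟩
  · rw [← adjoint_comp, h.adjoint_inv_comp, h.2.1]
  · rw [← adjoint_comp, h.adjoint_comp_inv, h.1, adjoint_adjoint]
  · rw [← adjoint_comp, ← adjoint_comp, comp_assoc, h.2.2]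

lemma adjoint_comp_self_comp_inv (h : IsMPInv T Td) : adjoint T ∘L T ∘L Td = adjoint T := by
  rw [← h.adjoint_comp_inv, ← adjoint_comp, comp_assoc, h.comp_inv_comp_self]

lemma adjoint_comp_self_eq_iff (h : IsMPInv T Td) :
    adjoint T ∘L T = adjoint T ∘L S ↔ Td ∘L T = Td ∘L S := by
  constructor
  · intro hS
    have hTS : T ∘L Td ∘L S = T :=
      calc T ∘L Td ∘L S = adjoint (T ∘L Td) ∘L S := congrArg (· ∘L S) h.adjoint_comp_inv.symm
        _ = adjoint Td ∘L adjoint T ∘L T := by rw [adjoint_comp, comp_assoc, hS]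
        _ = T := by
          rw [← comp_assoc, ← adjoint_comp, h.adjoint_comp_inv, comp_assoc, h.comp_inv_comp_self]
    calc Td ∘L T = Td ∘L T ∘L Td ∘L S := by rw [hTS]
      _ = Td ∘L S := congrArg (· ∘L S) h.2.2
  · intro hS
    calc adjoint T ∘L T = adjoint T ∘L T ∘L Td ∘L S := by rw [← hS, h.comp_inv_comp_self]
      _ = adjoint T ∘L S := congrArg (· ∘L S) h.adjoint_comp_self_comp_inv

lemma comp_adjoint_eq_iff (h : IsMPInv T Td) :
    T ∘L adjoint T = S ∘L adjoint T ↔ T ∘L Td = S ∘L Td := by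
  rw [← adjoint.injective.eq_iff, adjoint_comp, adjoint_comp,
    (isMPInv_adjoint h).adjoint_comp_self_eq_iff, ← adjoint.injective.eq_iff, adjoint_comp,
    adjoint_comp]
  simp only [adjoint_adjoint]

lemma starLE_iff (h : IsMPInv T Td) : StarLE T S ↔ Td ∘L T = Td ∘L S ∧ T ∘L Td = S ∘L Td :=
  and_congr h.adjoint_comp_self_eq_iff h.comp_adjoint_eq_iff

lemma comp_inv_eq_of_starLE (hT : IsMPInv T Td) (hS : IsMPInv S Sd) (h : StarLE T S) :
    T ∘L Sd = T ∘L Td := by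
  obtain ⟨h1, h2⟩ := hT.starLE_iff.1 h
  have hTS : T ∘L Td ∘L S = T := by rw [← h1, hT.comp_inv_comp_self]
  have hST : S ∘L Td ∘L T = T := by rw [← comp_assoc, ← h2, comp_assoc, hT.comp_inv_comp_self]
  have hPS : S ∘L Sd ∘L T = T :=
    calc S ∘L Sd ∘L T = S ∘L Sd ∘L S ∘L Td ∘L T := by rw [hST]
      _ = S ∘L Td ∘L T := congrArg (· ∘L Td ∘L T) hS.comp_inv_comp_self
      _ = T := hST
  calc T ∘L Sd = (T ∘L Td) ∘L (S ∘L Sd) := congrArg (· ∘L Sd) hTS.symm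
    _ = adjoint ((S ∘L Sd) ∘L (T ∘L Td)) := by
      rw [adjoint_comp, hT.adjoint_comp_inv, hS.adjoint_comp_inv]
    _ = adjoint (T ∘L Td) := by rw [← comp_assoc, comp_assoc S, hPS]
    _ = T ∘L Td := hT.adjoint_comp_inv

lemma starLE_inv (hT : IsMPInv T Td) (hS : IsMPInv S Sd) (h : StarLE T S) : StarLE Td Sd := by
  have hdual := (isMPInv_adjoint hT).comp_inv_eq_of_starLE (isMPInv_adjoint hS) (starLE_adjoint h)
  rw [← adjoint_comp, ← adjoint_comp, adjoint.injective.eq_iff] at hdual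
  exact hT.symm.starLE_iff.2 ⟨(hT.comp_inv_eq_of_starLE hS h).symm, hdual.symm⟩

end IsMPInv

end StarOrder

variable {H K : Type*} [NormedAddCommGroup H] [InnerProductSpace ℂ H] [CompleteSpace H]
  [NormedAddCommGroup K] [InnerProductSpace ℂ K] [CompleteSpace K]

theorem stmt11_general (A B : H →L[ℂ] K) (Ad Bd : K →L[ℂ] H)
    (hAd : IsMPInv A Ad) (hBd : IsMPInv B Bd) :
    ((adjoint A) ∘L A = (adjoint A) ∘L B ∧ A ∘L (adjoint A) = B ∘L (adjoint A)) ↔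
    ((adjoint Ad) ∘L Ad = (adjoint Ad) ∘L Bd ∧ Ad ∘L (adjoint Ad) = Bd ∘L (adjoint Ad)) :=
  ⟨hAd.starLE_inv hBd, hAd.symm.starLE_inv hBd.symm⟩

theorem stmt11 (A B : H →L[ℂ] K) (Ad Bd : K →L[ℂ] H)
    (hA : IsClosed (LinearMap.range (A : H →ₗ[ℂ] K) : Set K)) (hB : IsClosed (LinearMap.range (B : H →ₗ[ℂ] K) : Set K))
    (hAd : IsMPInv A Ad) (hBd : IsMPInv B Bd) :
    ((adjoint A) ∘L A = (adjoint A) ∘L B ∧ A ∘L (adjoint A) = B ∘L (adjoint A)) ↔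
    ((adjoint Ad) ∘L Ad = (adjoint Ad) ∘L Bd ∧ Ad ∘L (adjoint Ad) = Bd ∘L (adjoint Ad)) :=
  stmt11_general A B Ad Bd hAd hBd
end

section
/- Let A, B ∈ L(H,K) with range(A) ⊆ range(B), range(A*) ⊆ range(B*), and B having closed range. Then A ≤⁻ B in the minus order if and only if B† A is idempotent, where B† is the bounded Moore-Penrose inverse of B. -/
open ContinuousLinearMap

/-!
If `A = B Q` with `Q` idempotent and `A B† B = A`, then `A B† A = A B† B Q = A Q = B Q² = A`, so
`B† A` is idempotent. Conversely, if `B B† A = A` and `B† A` is idempotent, then `Q = B† A` and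
`Q̃ = A B†` are idempotents with `B Q = A = Q̃ B`. Both side conditions hold because `B B†` and
`B† B` are the orthogonal projections onto the closed ranges of `B` and `B*`, which contain the
ranges of `A` and `A*`.
-/

section MinusOrder

variable {R M N : Type*} [Semiring R] [TopologicalSpace M] [AddCommMonoid M] [Module R M]
  [TopologicalSpace N] [AddCommMonoid N] [Module R N]

def MinusLE (A B : M →L[R] N) : Prop :=
  ∃ (Qt : N →L[R] N) (Q : M →L[R] M), Qt ∘L Qt = Qt ∧ Q ∘L Q = Q ∧ A = Qt ∘L B ∧ A = B ∘L Q

theorem minusLE_iff_comp_idempotent {A B : M →L[R] N} {Bd : N →L[R] M}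
    (hleft : B ∘L (Bd ∘L A) = A) (hright : A ∘L (Bd ∘L B) = A) :
    MinusLE A B ↔ (Bd ∘L A) ∘L (Bd ∘L A) = Bd ∘L A := by
  constructor
  · rintro ⟨-, Q, -, hQ, -, hAQ⟩
    have hABdA : A ∘L (Bd ∘L A) = A :=
      calc A ∘L (Bd ∘L A) = (A ∘L (Bd ∘L B)) ∘L Q := by rw [hAQ]; simp only [comp_assoc]
        _ = B ∘L (Q ∘L Q) := by rw [hright, hAQ, comp_assoc]
        _ = A := by rw [hQ, hAQ]
    rw [comp_assoc, hABdA]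
  · intro hidem
    have hABdA : A ∘L (Bd ∘L A) = A :=
      calc A ∘L (Bd ∘L A) = B ∘L ((Bd ∘L A) ∘L (Bd ∘L A)) := by
            rw [← comp_assoc B, hleft]
        _ = A := by rw [hidem, hleft]
    refine ⟨A ∘L Bd, Bd ∘L A, ?_, hidem, ?_, hleft.symm⟩
    · rw [← comp_assoc, comp_assoc A, hABdA]
    · rw [comp_assoc, hright]

end MinusOrder

section ProjCR

variable {E F G : Type*} [NormedAddCommGroup E] [InnerProductSpace ℂ E]
  [NormedAddCommGroup F] [InnerProductSpace ℂ F] [CompleteSpace F]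
  [NormedAddCommGroup G] [InnerProductSpace ℂ G]

theorem projCR_apply_of_mem (T : E →L[ℂ] F) {x : F}
    (hx : x ∈ (LinearMap.range (T : E →ₗ[ℂ] F)).topologicalClosure) : projCR T x = x := by
  have : CompleteSpace (LinearMap.range (T : E →ₗ[ℂ] F)).topologicalClosure :=
    (LinearMap.range (T : E →ₗ[ℂ] F)).isClosed_topologicalClosure.completeSpace_coe
  exact Submodule.starProjection_eq_self_iff.mpr hx

theorem isSelfAdjoint_projCR (T : E →L[ℂ] F) : IsSelfAdjoint (projCR T) := by
  have : CompleteSpace (LinearMap.range (T : E →ₗ[ℂ] F)).topologicalClosure :=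
    (LinearMap.range (T : E →ₗ[ℂ] F)).isClosed_topologicalClosure.completeSpace_coe
  exact isSelfAdjoint_starProjection _

theorem projCR_comp_of_range_le (T : E →L[ℂ] F) (S : G →L[ℂ] F)
    (h : LinearMap.range (S : G →ₗ[ℂ] F) ≤ (LinearMap.range (T : E →ₗ[ℂ] F)).topologicalClosure) :
    projCR T ∘L S = S := by
  ext x
  exact projCR_apply_of_mem T (h ⟨x, rfl⟩)

theorem comp_projCR_of_range_adjoint_le [CompleteSpace G] (T : E →L[ℂ] F) (S : F →L[ℂ] G)
    (h : LinearMap.range (adjoint S : G →ₗ[ℂ] F) ≤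
      (LinearMap.range (T : E →ₗ[ℂ] F)).topologicalClosure) :
    S ∘L projCR T = S := by
  have := congrArg adjoint (projCR_comp_of_range_le T (adjoint S) h)
  rwa [adjoint_comp, (isSelfAdjoint_projCR T).adjoint_eq, adjoint_adjoint] at this

end ProjCR

variable {H K : Type*} [NormedAddCommGroup H] [InnerProductSpace ℂ H] [CompleteSpace H]
  [NormedAddCommGroup K] [InnerProductSpace ℂ K] [CompleteSpace K]

theorem stmt14_general (A B : H →L[ℂ] K) (Bd : K →L[ℂ] H)
    (hBd : IsMPInv B Bd)
    (h1 : LinearMap.range (A : H →ₗ[ℂ] K) ≤ LinearMap.range (B : H →ₗ[ℂ] K))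
    (h2 : LinearMap.range (adjoint A : K →ₗ[ℂ] H) ≤ LinearMap.range (adjoint B : K →ₗ[ℂ] H)) :
    (∃ (Qt : K →L[ℂ] K) (Q : H →L[ℂ] H),
      Qt ∘L Qt = Qt ∧ Q ∘L Q = Q ∧ A = Qt ∘L B ∧ A = B ∘L Q) ↔
    (Bd ∘L A) ∘L (Bd ∘L A) = Bd ∘L A := by
  obtain ⟨hBBd, hBdB, -⟩ := hBd
  refine minusLE_iff_comp_idempotent ?_ ?_
  · rw [← comp_assoc, hBBd]
    exact projCR_comp_of_range_le B A (h1.trans (Submodule.le_topologicalClosure _))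
  · rw [hBdB]
    exact comp_projCR_of_range_adjoint_le (adjoint B) A
      (h2.trans (Submodule.le_topologicalClosure _))

theorem stmt14 (A B : H →L[ℂ] K) (Bd : K →L[ℂ] H)
    (hB : IsClosed (LinearMap.range (B : H →ₗ[ℂ] K) : Set K)) (hBd : IsMPInv B Bd)
    (h1 : LinearMap.range (A : H →ₗ[ℂ] K) ≤ LinearMap.range (B : H →ₗ[ℂ] K))
    (h2 : LinearMap.range (adjoint A : K →ₗ[ℂ] H) ≤ LinearMap.range (adjoint B : K →ₗ[ℂ] H)) :
    (∃ (Qt : K →L[ℂ] K) (Q : H →L[ℂ] H),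
      Qt ∘L Qt = Qt ∧ Q ∘L Q = Q ∧ A = Qt ∘L B ∧ A = B ∘L Q) ↔
    (Bd ∘L A) ∘L (Bd ∘L A) = Bd ∘L A :=
  stmt14_general A B Bd hBd h1 h2
end
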